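/- Under the uniform arrival distribution on [0, t_b], if t_b < d(1/v_w - 1/v_b), then the expected travel time E(t_w) is strictly decreasing on [0, t_b]; in particular E(t_b) < E(0) = d/v_w, so it is always optimal to wait for the bus. -/

import Mathlib

open Set

theorem strictAntiOn_neg_sq_div_add_mul_add {a c e : ℝ} (ha : 0 < a) (hc : c ≤ 0) :
    StrictAntiOn (fun t : ℝ => -t ^ 2 / (2 * a) + c * t + e) (Ici 0) := by
  intro x hx y _ hxy
  have hsecant : c - (x + y) / (2 * a) < 0 := by
    have : 0 < (x + y) / (2 * a) := div_pos (by linarith [mem_Ici.mp hx]) (by positivity)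
    linarith
  have hdiff : (-y ^ 2 / (2 * a) + c * y + e) - (-x ^ 2 / (2 * a) + c * x + e)
      = (y - x) * (c - (x + y) / (2 * a)) := by
    field_simp
    ring
  have hneg := mul_neg_of_pos_of_neg (sub_pos.mpr hxy) hsecant
  simp only
  linarith

theorem stmt_13_general (d v_w v_b t_b : ℝ)
    (htb : 0 < t_b) (h : t_b < d * (1 / v_w - 1 / v_b)) :
    StrictAntiOn (fun t_w : ℝ =>
        -t_w ^ 2 / (2 * t_b) + (d * (1 / v_b - 1 / v_w) / t_b + 1) * t_w + d / v_w)
      (Set.Icc 0 t_b) ∧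
    (-t_b ^ 2 / (2 * t_b) + (d * (1 / v_b - 1 / v_w) / t_b + 1) * t_b + d / v_w
        < d / v_w) := by
  -- `E'(0) ≤ 0`, and `E'` decreases, so `E` decreases on all of `[0, t_b]`.
  have hslope : d * (1 / v_b - 1 / v_w) / t_b + 1 ≤ 0 := by
    rw [div_add_one htb.ne']
    exact div_nonpos_of_nonpos_of_nonneg (by linarith) htb.le
  have hanti := (strictAntiOn_neg_sq_div_add_mul_add (e := d / v_w) htb hslope).mono
    (Icc_subset_Ici_self : Icc 0 t_b ⊆ Ici 0)
  refine ⟨hanti, ?_⟩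
  simpa using hanti (left_mem_Icc.mpr htb.le) (right_mem_Icc.mpr htb.le) htb

theorem stmt_13 (d v_w v_b t_b : ℝ) (hd : 0 < d) (hvw : 0 < v_w) (hvb : v_w < v_b)
    (htb : 0 < t_b) (h : t_b < d * (1 / v_w - 1 / v_b)) :
    StrictAntiOn (fun t_w : ℝ =>
        -t_w ^ 2 / (2 * t_b) + (d * (1 / v_b - 1 / v_w) / t_b + 1) * t_w + d / v_w)
      (Set.Icc 0 t_b) ∧
    (-t_b ^ 2 / (2 * t_b) + (d * (1 / v_b - 1 / v_w) / t_b + 1) * t_b + d / v_w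
        < d / v_w) :=
  stmt_13_general d v_w v_b t_b htb h
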